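/- For any bridge substring w of T with |K(w)| ≥ 2, the total count Σ_{i=1}^{⌊m/2⌋−1} |K₊^{(i)}(w)| is at most #w, where m is the RLE size of T. (Interpretation: in the tree rooted at w whose children relation is given by K, every node in K₊ has at least 2 children, the number of leaves is at most #w, hence the number of branching nodes is at most #w.) -/

import Mathlib

/-- `w` occurs in `T` iff `w` is a (contiguous) substring, i.e. infix, of `T`. -/
def IsMAW {α : Type*} [DecidableEq α] (w T : List α) : Prop :=
  w ≠ [] ∧ ¬ w <:+: T ∧ ∀ v : List α, v <:+: w → v ≠ w → v <:+: T

/-- RLE size: the number of maximal runs of equal characters. -/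
def rleSize {α : Type*} [DecidableEq α] (w : List α) : ℕ :=
  (w.destutter (· ≠ ·)).length

/-- A bridge: length ≥ 2, first two characters differ, last two characters differ. -/
def IsBridge {α : Type*} (w : List α) : Prop :=
  2 ≤ w.length ∧ w[0]? ≠ w[1]? ∧ w[w.length - 2]? ≠ w[w.length - 1]?

/-- Truncate the first run to exponent 1. -/
def truncHead {α : Type*} [DecidableEq α] : List α → List α
  | [] => []
  | a :: t => a :: t.dropWhile (· == a)

/-- Remove the first run completely. -/
def dropHeadRun {α : Type*} [DecidableEq α] : List α → List α
  | [] => []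
  | a :: t => (a :: t).dropWhile (· == a)

/-- Remove the first run and truncate the new first run to exponent 1. -/
def leftReduce {α : Type*} [DecidableEq α] (w : List α) : List α :=
  truncHead (dropHeadRun w)

/-- `bridgeReduce w = w^{(1)}`: remove the first and last runs and truncate the
new outer runs to exponent 1; the empty string if `R(w) ≤ 2`. -/
def bridgeReduce {α : Type*} [DecidableEq α] (w : List α) : List α :=
  if rleSize w ≤ 2 then [] else (leftReduce ((leftReduce w).reverse)).reverse


instance {α : Type*} [DecidableEq α] : DecidablePred (IsBridge (α := α)) := fun w => by
  unfold IsBridge; infer_instance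

/-- Number of occurrences of `w` in `T`. -/
def countOcc {α : Type*} [DecidableEq α] (w T : List α) : ℕ :=
  ((List.range (T.length + 1)).filter
    (fun i => decide ((T.drop i).take w.length = w ∧ i + w.length ≤ T.length))).length

/-- `K(w)`: the set of bridge substrings `z` of `T` with `z^{(1)} = w`, as a `Finset`. -/
def KFin {α : Type*} [DecidableEq α] (T w : List α) : Finset (List α) :=
  T.sublists.toFinset.filter (fun z => z <:+: T ∧ IsBridge z ∧ bridgeReduce z = w)

/-- `K₊(w) = { z ∈ K(w) : |K(z)| ≥ 2 }`. -/
def KplusFin {α : Type*} [DecidableEq α] (T w : List α) : Finset (List α) :=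
  (KFin T w).filter (fun z => 2 ≤ (KFin T z).card)

/-- `K^{(t)}(w)`: bridge substrings `z` of `T` with `z^{(t)} = w`. -/
def KIter {α : Type*} [DecidableEq α] (T w : List α) (t : ℕ) : Finset (List α) :=
  T.sublists.toFinset.filter (fun z => z <:+: T ∧ IsBridge z ∧ bridgeReduce^[t] z = w)

/-- `K₊^{(t)}(w) = { z ∈ K^{(t)}(w) : |K(z)| ≥ 2 }`. -/
def KplusIter {α : Type*} [DecidableEq α] (T w : List α) (t : ℕ) : Finset (List α) :=
  (KIter T w t).filter (fun z => 2 ≤ (KFin T z).card)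

/-- `K(w)` as a set. -/
def KSet {α : Type*} [DecidableEq α] (T w : List α) : Set (List α) :=
  {z | z <:+: T ∧ IsBridge z ∧ bridgeReduce z = w}

/-- Type-3 MAW: a MAW `a u b` with `R = 3`, `a ≠ u[1]`, `b ≠ u[|u|]`. -/
def IsType3MAW {α : Type*} [DecidableEq α] (w T : List α) : Prop :=
  IsMAW w T ∧ rleSize w = 3 ∧
    ∃ (a b : α) (u : List α), u ≠ [] ∧ w = a :: u ++ [b] ∧
      u.head? ≠ some a ∧ u.getLast? ≠ some b

/-- Type-4 MAW: a MAW `a u b` with `R ≥ 4`, `a ≠ u[1]`, `b ≠ u[|u|]`. -/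
def IsType4MAW {α : Type*} [DecidableEq α] (w T : List α) : Prop :=
  IsMAW w T ∧ 4 ≤ rleSize w ∧
    ∃ (a b : α) (u : List α), u ≠ [] ∧ w = a :: u ++ [b] ∧
      u.head? ≠ some a ∧ u.getLast? ≠ some b

/-- Type-5 MAW: a MAW `a u b` with `R ≥ 2` and `a = u[1]` or `b = u[|u|]`. -/
def IsType5MAW {α : Type*} [DecidableEq α] (w T : List α) : Prop :=
  IsMAW w T ∧ 2 ≤ rleSize w ∧
    ∃ (a b : α) (u : List α), u ≠ [] ∧ w = a :: u ++ [b] ∧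
      (u.head? = some a ∨ u.getLast? = some b)

/-- The exponent of the longest maximal run of `a` in `T`. -/
noncomputable def maxRunLen {α : Type*} [DecidableEq α] (a : α) (T : List α) : ℕ :=
  sSup {q : ℕ | List.replicate q a <:+: T}

/-- `w` occurs in `T` starting at position `k` (0-based). -/
def OccursAt {α : Type*} [DecidableEq α] (w T : List α) (k : ℕ) : Prop :=
  k + w.length ≤ T.length ∧ (T.drop k).take w.length = w

/-!
Every `z' ∈ K(z)` has the form `c aᵏ z bʳ c'`, where `a`, `b` are the first and last letters of
`z` and `c ≠ a`, `c' ≠ b`. Sending an occurrence of `z'` in `T` to the occurrence of `z` inside it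
is injective, since the maximal runs of `a` and `b` around that occurrence of `z` recover `k`,
`r`, `c`, `c'` and the starting position. Hence `∑_{z' ∈ K(z)} #z' ≤ #z`: the occurrence count is
a weight on the tree of `K`-descendants of `w` that dominates the total weight of the children of
every node. In such a tree, by induction on the depth, the nodes with at least two children
are fewer than the weight of the root.
-/

open Finset in
theorem sum_range_add_one_le_of_branching {β : Type*} (P : β → Prop) (C : β → Finset β)
    (f : β → ℕ) (g : ℕ → β → ℕ) (hC : ∀ z, P z → ∀ z' ∈ C z, P z')
    (hf : ∀ z, P z → 1 ≤ f z) (hsum : ∀ z, P z → ∑ z' ∈ C z, f z' ≤ f z)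
    (hg_zero : ∀ z, P z → g 0 z ≤ 1) (hg_zero_eq : ∀ z, P z → #(C z) < 2 → g 0 z = 0)
    (hg_succ : ∀ z, P z → ∀ t, g (t + 1) z = ∑ z' ∈ C z, g t z') (n : ℕ) :
    ∀ z, P z → ∑ t ∈ range n, g t z + 1 ≤ f z := by
  induction n with
  | zero => simpa using hf
  | succ n ih =>
    intro z hz
    have hchildren : ∑ z' ∈ C z, ∑ t ∈ range n, g t z' + #(C z) ≤ f z := by
      simpa [sum_add_distrib] using
        (sum_le_sum fun z' hz' => ih z' (hC z hz z' hz')).trans (hsum z hz)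
    rw [Finset.sum_range_succ', sum_congr rfl fun t _ => hg_succ z hz t, sum_comm]
    rcases (C z).eq_empty_or_nonempty with hempty | hne
    · simp [hempty, hg_zero_eq z hz (by simp [hempty]), hf z hz]
    · have := hg_zero z hz
      have := hne.card_pos
      rcases lt_or_ge #(C z) 2 with h | h
      · rw [hg_zero_eq z hz h]
        omega
      · omega

namespace List

variable {α : Type*}

theorem replicate_append_cons_inj {a c₁ c₂ : α} {k₁ k₂ : ℕ} {l₁ l₂ : List α}
    (h₁ : c₁ ≠ a) (h₂ : c₂ ≠ a) (h : replicate k₁ a ++ c₁ :: l₁ = replicate k₂ a ++ c₂ :: l₂) :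
    k₁ = k₂ ∧ c₁ = c₂ ∧ l₁ = l₂ := by
  induction k₁ generalizing k₂ with
  | zero => cases k₂ <;> simp_all [replicate_succ]
  | succ k ih =>
    cases k₂ with
    | zero => simp_all [replicate_succ]
    | succ k₂ => simpa [replicate_succ] using ih (by simpa [replicate_succ] using h)

theorem append_cons_replicate_inj {s₁ s₂ : List α} {a c₁ c₂ : α} {k₁ k₂ : ℕ}
    (h₁ : c₁ ≠ a) (h₂ : c₂ ≠ a) (h : s₁ ++ c₁ :: replicate k₁ a = s₂ ++ c₂ :: replicate k₂ a) :
    s₁ = s₂ ∧ c₁ = c₂ ∧ k₁ = k₂ := by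
  have := congrArg reverse h
  simp only [reverse_append, reverse_cons, reverse_replicate, append_assoc, singleton_append] at this
  obtain ⟨hk, hc, hs⟩ := replicate_append_cons_inj h₁ h₂ this
  exact ⟨reverse_injective hs, hc, hk⟩

theorem cons_eq_replicate_append_cons_dropWhile [DecidableEq α] (a : α) (u : List α) :
    a :: u = replicate (u.takeWhile (· == a)).length a ++ a :: u.dropWhile (· == a) := by
  have hrun : u.takeWhile (· == a) = replicate (u.takeWhile (· == a)).length a :=
    eq_replicate_iff.mpr ⟨rfl, fun b hb => by simpa using mem_takeWhile_imp hb⟩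
  conv_lhs => rw [← takeWhile_append_dropWhile (p := (· == a)) (l := u), hrun]
  rw [← cons_append, ← replicate_succ, replicate_succ', append_assoc, singleton_append]

end List

section Bridge

open List

variable {α : Type*}

theorem isBridge_iff {w : List α} :
    IsBridge w ↔ 2 ≤ w.length ∧ w.head? ≠ w.tail.head? ∧
      w.reverse.tail.head? ≠ w.reverse.head? := by
  refine and_congr_right fun hlen => and_congr (by cases w <;> simp [head?_eq_getElem?]) ?_
  rw [head?_tail, head?_reverse, getElem?_reverse (by omega),
    getLast?_eq_getElem?, show w.length - 1 - 1 = w.length - 2 by omega]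

theorem IsBridge.ne_nil {w : List α} (hw : IsBridge w) : w ≠ [] := by
  rintro rfl; simp [IsBridge] at hw

theorem IsBridge.exists_cons_cons {w : List α} (hw : IsBridge w) :
    ∃ c a u, w = c :: a :: u ∧ c ≠ a := by
  obtain ⟨hlen, hne, -⟩ := isBridge_iff.mp hw
  match w, hlen with
  | c :: a :: u, _ => exact ⟨c, a, u, rfl, by simpa using hne⟩

theorem IsBridge.reverse {w : List α} (hw : IsBridge w) : IsBridge w.reverse := by
  obtain ⟨hlen, h₁, h₂⟩ := isBridge_iff.mp hw
  exact isBridge_iff.mpr ⟨by simpa using hlen, h₂.symm, by simpa using h₁.symm⟩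

variable [DecidableEq α]

theorem leftReduce_suffix (l : List α) : leftReduce l <:+ l := by
  have hdrop : dropHeadRun l <:+ l := by
    cases l
    · exact suffix_rfl
    · exact dropWhile_suffix _
  refine IsSuffix.trans ?_ hdrop
  unfold leftReduce
  cases dropHeadRun l with
  | nil => exact suffix_rfl
  | cons a u => exact ⟨_, (cons_eq_replicate_append_cons_dropWhile a u).symm⟩

theorem bridgeReduce_infix (l : List α) : bridgeReduce l <:+: l := by
  unfold bridgeReduce
  split_ifs
  · exact nil_infix
  · exact (reverse_suffix.mp (by simpa using leftReduce_suffix _)).isInfix.trans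
      (leftReduce_suffix l).isInfix

theorem bridgeReduce_iterate_infix (l : List α) (t : ℕ) : bridgeReduce^[t] l <:+: l := by
  induction t with
  | zero => exact infix_rfl
  | succ t ih =>
    rw [Function.iterate_succ_apply']
    exact (bridgeReduce_infix _).trans ih

theorem leftReduce_cons_cons {c a : α} (h : c ≠ a) (u : List α) :
    ∃ k d, c :: a :: u = c :: (replicate k a ++ leftReduce (c :: a :: u)) ∧
      leftReduce (c :: a :: u) = a :: d ∧ d.head? ≠ some a := by
  have hred : leftReduce (c :: a :: u) = a :: u.dropWhile (· == a) := by
    simp [leftReduce, dropHeadRun, truncHead, h.symm]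
  refine ⟨(u.takeWhile (· == a)).length, _, ?_, hred, fun hd => ?_⟩
  · rw [hred, ← cons_eq_replicate_append_cons_dropWhile]
  · have := head?_dropWhile_not (· == a) u
    simp [hd] at this

theorem bridgeReduce_eq_nil_of_length_le_two {l : List α} (h : l.length ≤ 2) :
    bridgeReduce l = [] :=
  if_pos <| ((destutter_sublist _ _).length_le).trans h

theorem exists_eq_of_bridgeReduce_eq {z z' : List α} (hb : IsBridge z')
    (hz : bridgeReduce z' = z) (hne : z ≠ []) :
    ∃ (a b c c' : α) (k r : ℕ),
      z.head? = some a ∧ z.tail.head? ≠ some a ∧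
      z.reverse.head? = some b ∧ z.reverse.tail.head? ≠ some b ∧ c ≠ a ∧ c' ≠ b ∧
      z' = c :: (replicate k a ++ leftReduce z') ∧ leftReduce z' = z ++ (replicate r b ++ [c']) := by
  replace hz : (leftReduce (leftReduce z').reverse).reverse = z := by
    unfold bridgeReduce at hz
    split_ifs at hz
    exacts [absurd hz.symm hne, hz]
  obtain ⟨c, a, u, rfl, hca⟩ := hb.exists_cons_cons
  obtain ⟨k, d, hz', hm, hd⟩ := leftReduce_cons_cons hca u
  set m := leftReduce (c :: a :: u)
  obtain ⟨c', b, v, hmrev⟩ : ∃ c' b v, m.reverse = c' :: b :: v := by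
    rcases hmd : m.reverse with _ | ⟨c', _ | ⟨b, v⟩⟩
    · simp [hm] at hmd
    · rw [hmd] at hz
      exact absurd (by simpa [leftReduce, dropHeadRun, truncHead] using hz.symm) hne
    · exact ⟨c', b, v, rfl⟩
  have hcb : c' ≠ b := by
    obtain ⟨_, _, _, hrev, hne'⟩ := hb.reverse.exists_cons_cons
    rw [hz', ← cons_append, reverse_append, hmrev] at hrev
    simp only [cons_append, cons.injEq] at hrev
    rwa [hrev.1, hrev.2.1]
  obtain ⟨r, e, hv, hn, he⟩ := leftReduce_cons_cons hcb v
  rw [hmrev, hn] at hz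
  have hm' : m = z ++ (replicate r b ++ [c']) := by
    rw [← reverse_reverse m, hmrev, hv, hn, ← hz]; simp
  obtain ⟨a', zt, rfl⟩ := exists_cons_of_ne_nil hne
  obtain ⟨rfl, rfl⟩ : a = a' ∧ d = zt ++ (replicate r b ++ [c']) := by simpa [hm] using hm'
  refine ⟨a, b, c, c', k, r, rfl, ?_, ?_, ?_, hca, hcb, hz', hm'⟩
  · rcases zt with _ | ⟨x, zt⟩
    · simp
    · simpa using hd
  · simp [← hz]
  · simpa [← hz] using he

theorem isBridge_bridgeReduce {l : List α} (hl : IsBridge l)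
    (h : 2 ≤ (bridgeReduce l).length) : IsBridge (bridgeReduce l) := by
  obtain ⟨a, b, -, -, -, -, ha, ha', hb, hb', -⟩ :=
    exists_eq_of_bridgeReduce_eq hl rfl (ne_nil_of_length_pos (by omega))
  exact isBridge_iff.mpr ⟨h, ha ▸ ha'.symm, hb ▸ hb'⟩

theorem isBridge_iterate_bridgeReduce {l : List α} (hl : IsBridge l) {t : ℕ}
    (h : bridgeReduce (bridgeReduce^[t] l) ≠ []) : IsBridge (bridgeReduce^[t] l) := by
  induction t with
  | zero => exact hl
  | succ t ih =>
    rw [Function.iterate_succ_apply'] at h ⊢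
    have hlen : 2 < (bridgeReduce (bridgeReduce^[t] l)).length :=
      not_le.mp (mt bridgeReduce_eq_nil_of_length_le_two h)
    exact isBridge_bridgeReduce (ih (ne_nil_of_length_pos (by omega))) hlen.le

def occurrences (w T : List α) : Finset ℕ :=
  (Finset.range (T.length + 1)).filter
    (fun i => (T.drop i).take w.length = w ∧ i + w.length ≤ T.length)

theorem countOcc_eq_card_occurrences (w T : List α) : countOcc w T = (occurrences w T).card :=
  rfl

theorem mem_occurrences {w T : List α} {i : ℕ} :
    i ∈ occurrences w T ↔ ∃ s t, T = s ++ w ++ t ∧ s.length = i := by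
  simp only [occurrences, Finset.mem_filter, Finset.mem_range]
  constructor
  · rintro ⟨hi, htake, hle⟩
    refine ⟨T.take i, (T.drop i).drop w.length, ?_, by rw [length_take]; omega⟩
    conv_lhs => rw [← take_append_drop i T, ← take_append_drop w.length (T.drop i), htake]
    simp
  · rintro ⟨s, t, rfl, rfl⟩
    simp

theorem countOcc_pos {w T : List α} (h : w <:+: T) : 0 < countOcc w T := by
  obtain ⟨s, t, hT⟩ := h
  exact Finset.card_pos.mpr ⟨s.length, mem_occurrences.mpr ⟨s, t, hT.symm, rfl⟩⟩

theorem mem_KFin {T z z' : List α} :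
    z' ∈ KFin T z ↔ z' <:+: T ∧ IsBridge z' ∧ bridgeReduce z' = z := by
  simp only [KFin, Finset.mem_filter, mem_toFinset, mem_sublists, and_iff_right_iff_imp]
  exact fun h => h.1.sublist

theorem mem_KplusIter {T z z' : List α} {t : ℕ} :
    z' ∈ KplusIter T z t ↔
      (z' <:+: T ∧ IsBridge z' ∧ bridgeReduce^[t] z' = z) ∧ 2 ≤ (KFin T z').card := by
  simp only [KplusIter, KIter, Finset.mem_filter, mem_toFinset, mem_sublists,
    and_congr_left_iff, and_iff_right_iff_imp]
  exact fun _ h => h.1.sublist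

theorem exists_split_of_mem_KFin {T z z' : List α} (hz' : z' ∈ KFin T z) (hz : z ≠ [])
    {q : ℕ} (hq : q ∈ occurrences z' T) :
    ∃ (a b c c' : α) (k r : ℕ) (s t : List α),
      z.head? = some a ∧ z.reverse.head? = some b ∧ c ≠ a ∧ c' ≠ b ∧
      z' = c :: (replicate k a ++ (z ++ (replicate r b ++ [c']))) ∧
      z'.length - (leftReduce z').length = k + 1 ∧
      T = (s ++ c :: replicate k a) ++ (z ++ (replicate r b ++ c' :: t)) ∧ s.length = q := by
  obtain ⟨-, hbridge, hred⟩ := mem_KFin.mp hz'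
  obtain ⟨a, b, c, c', k, r, ha, -, hb, -, hca, hcb, hshape, hm⟩ :=
    exists_eq_of_bridgeReduce_eq hbridge hred hz
  obtain ⟨s, t, hT, rfl⟩ := mem_occurrences.mp hq
  rw [hm] at hshape
  refine ⟨a, b, c, c', k, r, s, t, ha, hb, hca, hcb, hshape, ?_, ?_, rfl⟩
  · rw [hm, hshape]
    simp only [length_cons, length_append, length_replicate]
    omega
  · rw [hT, hshape]
    simp

theorem sum_countOcc_KFin_le {T z : List α} (hz : z ≠ []) :
    ∑ z' ∈ KFin T z, countOcc z' T ≤ countOcc z T := by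
  simp only [countOcc_eq_card_occurrences, ← Finset.card_sigma]
  -- an occurrence of `z' = c aᵏ z bʳ c'` at `q` is sent to the occurrence of `z` at `q + k + 1`
  refine Finset.card_le_card_of_injOn (fun p => p.2 + (p.1.length - (leftReduce p.1).length))
    (fun ⟨z', q⟩ hp => ?_) (fun ⟨z₁, q₁⟩ hp₁ ⟨z₂, q₂⟩ hp₂ heq => ?_)
  · obtain ⟨hz', hq⟩ := Finset.mem_sigma.mp hp
    obtain ⟨a, b, c, c', k, r, s, t, -, -, -, -, -, hoff, hT, rfl⟩ :=
      exists_split_of_mem_KFin hz' hz hq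
    refine mem_occurrences.mpr ⟨s ++ c :: replicate k a, _, by rw [hT, ← append_assoc], ?_⟩
    simp [hoff]
  · obtain ⟨hz₁, hq₁⟩ := Finset.mem_sigma.mp hp₁
    obtain ⟨hz₂, hq₂⟩ := Finset.mem_sigma.mp hp₂
    obtain ⟨a, b, c₁, c₁', k₁, r₁, s₁, t₁, ha₁, hb₁, hca₁, hcb₁, rfl, hoff₁, hT₁, rfl⟩ :=
      exists_split_of_mem_KFin hz₁ hz hq₁
    obtain ⟨a₂, b₂, c₂, c₂', k₂, r₂, s₂, t₂, ha₂, hb₂, hca₂, hcb₂, rfl, hoff₂, hT₂, rfl⟩ :=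
      exists_split_of_mem_KFin hz₂ hz hq₂
    obtain rfl : a₂ = a := Option.some.inj (ha₂.symm.trans ha₁)
    obtain rfl : b₂ = b := Option.some.inj (hb₂.symm.trans hb₁)
    simp only [hoff₁, hoff₂] at heq
    obtain ⟨hleft, hright⟩ := append_inj (hT₁.symm.trans hT₂)
      (by simp only [length_append, length_cons, length_replicate]; omega)
    obtain ⟨rfl, rfl, rfl⟩ := append_cons_replicate_inj hca₁ hca₂ hleft
    obtain ⟨rfl, rfl, -⟩ := replicate_append_cons_inj hcb₁ hcb₂ (append_cancel_left hright)
    rfl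

theorem card_KplusIter_zero_le_one (T z : List α) : (KplusIter T z 0).card ≤ 1 :=
  Finset.card_le_one.mpr fun _ h₁ _ h₂ =>
    ((mem_KplusIter.mp h₁).1.2.2).trans (mem_KplusIter.mp h₂).1.2.2.symm

theorem KplusIter_zero_eq_empty {T z : List α} (h : (KFin T z).card < 2) :
    KplusIter T z 0 = ∅ :=
  Finset.eq_empty_of_forall_notMem fun z' hz' => by
    obtain ⟨⟨-, -, rfl⟩, h2⟩ := mem_KplusIter.mp hz'
    exact absurd h2 (not_le.mpr h)

theorem KplusIter_succ {T z : List α} (hz : z ≠ []) (t : ℕ) :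
    KplusIter T z (t + 1) = (KFin T z).biUnion (KplusIter T · t) := by
  ext z''
  simp only [Finset.mem_biUnion, mem_KplusIter, mem_KFin, Function.iterate_succ_apply']
  constructor
  · rintro ⟨⟨hz'', hb'', rfl⟩, h2⟩
    exact ⟨_, ⟨(bridgeReduce_iterate_infix z'' t).trans hz'',
      isBridge_iterate_bridgeReduce hb'' hz, rfl⟩, ⟨hz'', hb'', rfl⟩, h2⟩
  · rintro ⟨_, ⟨-, -, rfl⟩, ⟨hz'', hb'', rfl⟩, h2⟩
    exact ⟨⟨hz'', hb'', rfl⟩, h2⟩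

theorem card_KplusIter_succ {T z : List α} (hz : z ≠ []) (t : ℕ) :
    (KplusIter T z (t + 1)).card = ∑ z' ∈ KFin T z, (KplusIter T z' t).card := by
  rw [KplusIter_succ hz, Finset.card_biUnion]
  intro z₁ _ z₂ _ hne
  refine Finset.disjoint_left.mpr fun z' h₁ h₂ => hne ?_
  exact (mem_KplusIter.mp h₁).1.2.2.symm.trans (mem_KplusIter.mp h₂).1.2.2

theorem sum_card_KplusIter_add_one_le {T z : List α} (hzT : z <:+: T) (hz : z ≠ []) (n : ℕ) :
    ∑ t ∈ Finset.range n, (KplusIter T z t).card + 1 ≤ countOcc z T :=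
  sum_range_add_one_le_of_branching (fun z => z <:+: T ∧ z ≠ []) (KFin T) (countOcc · T)
    (fun t z => (KplusIter T z t).card)
    (fun _ _ z' hz' => ⟨(mem_KFin.mp hz').1, (mem_KFin.mp hz').2.1.ne_nil⟩)
    (fun _ hz => countOcc_pos hz.1) (fun _ hz => sum_countOcc_KFin_le hz.2)
    (fun z _ => card_KplusIter_zero_le_one T z)
    (fun _ _ h => by simp only [KplusIter_zero_eq_empty h, Finset.card_empty])
    (fun _ hz => card_KplusIter_succ hz.2) n z ⟨hzT, hz⟩

end Bridge

theorem stmt7_general {α : Type*} [DecidableEq α] (T w : List α)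
    (hw : w <:+: T) (hb : IsBridge w) :
    ∑ i ∈ Finset.Icc 1 (rleSize T / 2 - 1), (KplusIter T w i).card ≤ countOcc w T := by
  have hsub : Finset.Icc 1 (rleSize T / 2 - 1) ⊆ Finset.range (rleSize T / 2) := by
    intro i hi
    simp only [Finset.mem_Icc, Finset.mem_range] at hi ⊢
    omega
  calc ∑ i ∈ Finset.Icc 1 (rleSize T / 2 - 1), (KplusIter T w i).card
      ≤ ∑ i ∈ Finset.range (rleSize T / 2), (KplusIter T w i).card :=
        Finset.sum_le_sum_of_subset hsub
    _ ≤ countOcc w T := (Nat.le_succ _).trans (sum_card_KplusIter_add_one_le hw hb.ne_nil _)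

theorem stmt7 {α : Type*} [DecidableEq α] (T w : List α)
    (hw : w <:+: T) (hb : IsBridge w) (h2 : 2 ≤ (KFin T w).card) :
    ∑ i ∈ Finset.Icc 1 (rleSize T / 2 - 1), (KplusIter T w i).card ≤ countOcc w T :=
  stmt7_general T w hw hb
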